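/- There exists an odometer based construction sequence over the alphabet Σ = {0,1} whose limit K has the property that for every x ∈ K, every k ∈ ℤ and every integer p ≥ 1, there exists b ∈ ℤ with x(k) ≠ x(k + b·p). In particular no element of K is a Toeplitz sequence, and no x ∈ K has any periodic position. -/

import Mathlib

open MeasureTheory

namespace OdoPaper

/-- The shift map `sh` on bi-infinite sequences: `(sh x)(n) = x(n+1)`. -/
def shift {σ : Type*} (x : ℤ → σ) : ℤ → σ := fun m => x (m + 1)

/-- The `n`-th iterate (`n : ℤ`) of the shift map: `(shiftZ n x)(m) = x(m+n)`. -/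
def shiftZ {σ : Type*} (n : ℤ) (x : ℤ → σ) : ℤ → σ := fun m => x (m + n)

/-- `Kseq k n = K_n`, where `K_0 = 1` and `K_{n+1} = K_n * k_n`. -/
def Kseq (k : ℕ → ℕ) : ℕ → ℕ
  | 0 => 1
  | n + 1 => Kseq k n * k n

/-- `w` occurs as a contiguous subword of `l` starting at position `p`. -/
def occursAt {σ : Type*} (w l : List σ) (p : ℕ) : Prop :=
  p + w.length ≤ l.length ∧ (l.drop p).take w.length = w

/-- The finite contiguous subword `x↾[a, a+m)` of `x : ℤ → σ`. -/
def subwordAt {σ : Type*} (x : ℤ → σ) (a : ℤ) (m : ℕ) : List σ :=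
  List.ofFn (fun i : Fin m => x (a + i))

/-- The limit `K` of a construction sequence: all bi-infinite sequences each of whose finite
contiguous subwords occurs as a contiguous subword of some word in some `W n`. -/
def CSLimit {σ : Type*} (W : ℕ → Set (List σ)) : Set (ℤ → σ) :=
  { x | ∀ (a : ℤ) (m : ℕ), ∃ n, ∃ w ∈ W n, ∃ p, occursAt (subwordAt x a m) w p }

/-- `(W_n)` is an odometer based construction sequence over the finite alphabet `σ` with
coefficient sequence `k`:  `W 0` consists of the one-letter words; every word of `W n` has
length `K_n`; every word of `W (n+1)` is a concatenation of `k n` words from `W n`; each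
`W n` is uniquely readable; and every `n`-word occurs in every `(n+1)`-word. -/
structure OdometerBasedCS (σ : Type*) [Fintype σ] (k : ℕ → ℕ) (W : ℕ → Set (List σ)) :
    Prop where
  two_le : ∀ n, 2 ≤ k n
  w_zero : W 0 = { l : List σ | ∃ a : σ, l = [a] }
  nonempty : ∀ n, (W n).Nonempty
  finite : ∀ n, (W n).Finite
  length_eq : ∀ n, ∀ w ∈ W n, w.length = Kseq k n
  concat : ∀ n, ∀ w' ∈ W (n + 1),
    ∃ g : Fin (k n) → List σ, (∀ i, g i ∈ W n) ∧ w' = (List.ofFn g).flatten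
  unique_readable : ∀ n, ∀ u ∈ W n, ∀ v ∈ W n, ∀ w ∈ W n, ∀ p,
    occursAt w (u ++ v) p → p = 0 ∨ p = Kseq k n
  subword : ∀ n, ∀ w ∈ W n, ∀ w' ∈ W (n + 1), ∃ p, occursAt w w' p

/-!
Over the alphabet `ℤ/2` take `w₀(c) = c` and `w_{n+1}(c) = w_n(c) w_n(c+1)^{n+2}`, so that
`W_n = {w_n(0), w_n(1)}` and `k_n = n + 3`. Unique readability passes from level `n` to `n + 1`:
an occurrence of an `(n+1)`-word is aligned with the `n`-blocks by unique readability of `W_n`,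
and the block pattern `c (c+1)^{n+2}` occurs in the concatenation of two such patterns only at the
two trivial offsets.

Every `x` in the limit contains an aligned copy of some `w_{p+1}(c)`, whose `0`-th and `p`-th
blocks are the complementary words `w_p(c)` and `w_p(c+1)` of length `K_p ≥ p`. They differ at
every position, in particular at the positions of the residue class of `i` modulo `p`, so `x` is
not constant on `i + pℤ`.
-/

section Occurrences

variable {σ α : Type*}

theorem occursAt_iff_prefix_drop {w l : List σ} {p : ℕ} :
    occursAt w l p ↔ p ≤ l.length ∧ w <+: l.drop p := by
  rw [List.prefix_iff_eq_take, occursAt, eq_comm]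
  constructor
  · rintro ⟨hlen, h⟩
    exact ⟨by omega, h⟩
  · rintro ⟨hp, h⟩
    have := congrArg List.length h
    simp only [List.length_take, List.length_drop] at this
    exact ⟨by omega, h⟩

theorem occursAt.trans {u v w : List σ} {r q : ℕ} (huv : occursAt u v r) (hvw : occursAt v w q) :
    occursAt u w (q + r) := by
  rw [occursAt_iff_prefix_drop] at *
  have := hvw.2.length_le
  simp only [List.length_drop] at this
  refine ⟨by omega, ?_⟩
  rw [← List.drop_drop]
  exact huv.2.trans (hvw.2.drop r)

theorem occursAt.of_occursAt_of_le {u v l : List σ} {p q : ℕ} (hv : occursAt v l p)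
    (hu : occursAt u l q) (hqp : q ≤ p) (hpu : p + v.length ≤ q + u.length) :
    occursAt v u (p - q) := by
  rw [occursAt_iff_prefix_drop] at *
  refine ⟨by omega, List.prefix_of_prefix_length_le hv.2 ?_ (by simp; omega)⟩
  have := hu.2.drop (p - q)
  rw [List.drop_drop, show q + (p - q) = p by omega] at this
  exact this

theorem subwordAt_add_eq_of_occursAt {x : ℤ → σ} {a : ℤ} {m r : ℕ} {w : List σ}
    (h : occursAt w (subwordAt x a m) r) : subwordAt x (a + r) w.length = w := by
  obtain ⟨hlen, htake⟩ := h
  rw [← htake]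
  apply List.ext_getElem (by simp [subwordAt])
  intro j _ _
  simp [subwordAt, add_assoc]

theorem apply_eq_getElem_of_subwordAt_eq {x : ℤ → σ} {a : ℤ} {m j : ℕ} {w : List σ}
    (h : subwordAt x a m = w) (hj : j < w.length) : x (a + j) = w[j] := by
  subst h
  simp [subwordAt]

variable {f : α → List σ} {L : ℕ} (hf : ∀ a, (f a).length = L)
include hf

theorem length_flatten_map (l : List α) : (l.map f).flatten.length = l.length * L := by
  induction l with
  | nil => simp
  | cons a l ih => simp [hf, ih, add_mul, add_comm]

theorem drop_mul_flatten_map (l : List α) (m : ℕ) :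
    (l.map f).flatten.drop (m * L) = ((l.drop m).map f).flatten := by
  induction l generalizing m with
  | nil => simp
  | cons a l ih =>
    cases m with
    | zero => simp
    | succ m =>
      rw [List.map_cons, List.flatten_cons, add_mul, one_mul, add_comm, ← hf a,
        List.drop_length_add_append, hf a, ih, List.drop_succ_cons]

theorem occursAt_flatten_map {l : List α} {m : ℕ} (hm : m < l.length) :
    occursAt (f l[m]) (l.map f).flatten (m * L) := by
  rw [occursAt_iff_prefix_drop, drop_mul_flatten_map hf, List.drop_eq_getElem_cons hm,
    length_flatten_map hf]
  exact ⟨Nat.mul_le_mul_right _ hm.le, List.prefix_append _ _⟩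

theorem isPrefix_of_flatten_map_isPrefix (hL : 0 < L) (hinj : Function.Injective f) :
    ∀ {u v : List α}, (u.map f).flatten <+: (v.map f).flatten → u <+: v
  | [], _, _ => List.nil_prefix
  | a :: u, [], h => by
    have := h.length_le
    simp [hf] at this
    omega
  | a :: u, b :: v, h => by
    rw [List.map_cons, List.map_cons, List.flatten_cons, List.flatten_cons,
      List.prefix_append_inj_of_length_eq (by rw [hf, hf])] at h
    rw [hinj h.1, List.cons_prefix_cons]
    exact ⟨rfl, isPrefix_of_flatten_map_isPrefix hL hinj h.2⟩

theorem exists_occursAt_of_occursAt_flatten_map (hL : 0 < L) {u : List σ} {l : List α} {q : ℕ}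
    (h : occursAt u (l.map f).flatten q) (hu : 2 * L ≤ u.length + 1) :
    ∃ a ∈ l, ∃ r, occursAt (f a) u r := by
  have hlen := h.1
  rw [length_flatten_map hf] at hlen
  have hdiv := Nat.div_add_mod (q + L - 1) L
  have hmod := Nat.mod_lt (q + L - 1) hL
  set c := (q + L - 1) / L
  have hc : c < l.length := Nat.lt_of_mul_lt_mul_right (a := L) (by rw [mul_comm]; omega)
  exact ⟨l[c], List.getElem_mem hc, c * L - q,
    (occursAt_flatten_map hf hc).of_occursAt_of_le h (by rw [mul_comm]; omega)
      (by rw [hf, mul_comm]; omega)⟩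

theorem exists_eq_mul_of_occursAt_flatten_map (hL : 0 < L) (hinj : Function.Injective f)
    (hread : ∀ a b c p, occursAt (f c) (f a ++ f b) p → p = 0 ∨ p = L)
    {u v : List α} (hu : u ≠ []) {q : ℕ} (h : occursAt (u.map f).flatten (v.map f).flatten q) :
    ∃ q', q = q' * L ∧ occursAt u v q' := by
  obtain ⟨a, u, rfl⟩ := List.exists_cons_of_ne_nil hu
  have hlen := h.1
  rw [length_flatten_map hf, length_flatten_map hf, List.length_cons] at hlen
  have hdiv := Nat.div_add_mod' q L
  have hmod := Nat.mod_lt q hL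
  set c := q / L
  set s := q % L
  have hs : s = 0 := by
    by_contra hs
    have hc : c + 1 < v.length :=
      Nat.lt_of_mul_lt_mul_right (a := L) (by rw [add_mul] at hlen ⊢; omega)
    have hpair : occursAt (f v[c] ++ f v[c + 1]) (v.map f).flatten (c * L) := by
      rw [occursAt_iff_prefix_drop, drop_mul_flatten_map hf,
        List.drop_eq_getElem_cons (by omega), List.drop_eq_getElem_cons hc, length_flatten_map hf]
      refine ⟨Nat.mul_le_mul_right _ (by omega), ?_⟩
      simp only [List.map_cons, List.flatten_cons, ← List.append_assoc]
      exact List.prefix_append _ _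
    have hfirst : occursAt (f a) (v.map f).flatten q :=
      (occursAt_iff_prefix_drop.2 ⟨Nat.zero_le _, by simp⟩).trans h
    have hblock := hfirst.of_occursAt_of_le hpair (by omega)
      (by simp only [List.length_append, hf]; omega)
    rcases hread _ _ _ _ hblock with hs0 | hsL <;> omega
  refine ⟨c, by omega, occursAt_iff_prefix_drop.2 ⟨?_, ?_⟩⟩
  · exact Nat.le_of_mul_le_mul_right (by rw [add_mul] at hlen; omega) hL
  · apply isPrefix_of_flatten_map_isPrefix hf hL hinj
    rw [← drop_mul_flatten_map hf, show c * L = q by omega]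
    exact (occursAt_iff_prefix_drop.1 h).2

end Occurrences

theorem Kseq_pos {k : ℕ → ℕ} (hk : ∀ n, 0 < k n) (n : ℕ) : 0 < Kseq k n := by
  induction n with
  | zero => exact Nat.one_pos
  | succ n ih => exact Nat.mul_pos ih (hk n)

theorem strictMono_Kseq {k : ℕ → ℕ} (hk : ∀ n, 2 ≤ k n) : StrictMono (Kseq k) :=
  strictMono_nat_of_lt_succ fun n =>
    lt_mul_of_one_lt_right (Kseq_pos (fun n => two_pos.trans_le (hk n)) n) (hk n)

theorem fin_two_eq_or_eq_add_one : ∀ c d : Fin 2, c = d ∨ c = d + 1 := by decide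

theorem fin_two_add_one_ne : ∀ c : Fin 2, c + 1 ≠ c := by decide

def pattern (n : ℕ) (c : Fin 2) : List (Fin 2) := c :: List.replicate (n + 2) (c + 1)

def word : ℕ → Fin 2 → List (Fin 2)
  | 0, c => [c]
  | n + 1, c => ((pattern n c).map (word n)).flatten

def words (n : ℕ) : Set (List (Fin 2)) := Set.range (word n)

local notation "K" => Kseq (· + 3)

theorem Kseq_add_three_pos (n : ℕ) : 0 < K n := Kseq_pos (fun _ => Nat.succ_pos _) n

theorem strictMono_Kseq_add_three : StrictMono K := strictMono_Kseq fun _ => by omega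

theorem pattern_length (n : ℕ) (c : Fin 2) : (pattern n c).length = n + 3 := by
  simp [pattern]

theorem pattern_getElem_zero (n : ℕ) (c : Fin 2) :
    (pattern n c)[0]'(by simp [pattern]) = c := rfl

theorem pattern_getElem_of_pos {n m : ℕ} (c : Fin 2) (hm : 0 < m) (hmn : m < n + 3) :
    (pattern n c)[m]'(by simpa [pattern_length]) = c + 1 := by
  obtain ⟨m, rfl⟩ := Nat.exists_eq_add_of_lt hm
  simp [pattern]

theorem pattern_map_add_one (n : ℕ) (c : Fin 2) :
    (pattern n c).map (· + 1) = pattern n (c + 1) := by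
  simp [pattern]

theorem word_length (n : ℕ) (c : Fin 2) : (word n c).length = K n := by
  induction n generalizing c with
  | zero => rfl
  | succ n ih => rw [word, length_flatten_map ih, pattern_length, Kseq, mul_comm]

theorem word_add_one (n : ℕ) (c : Fin 2) : word n (c + 1) = (word n c).map (· + 1) := by
  induction n generalizing c with
  | zero => rfl
  | succ n ih =>
    simp only [word, List.map_flatten, List.map_map, ← pattern_map_add_one, Function.comp_def, ih]

theorem head?_word (n : ℕ) (c : Fin 2) : (word n c).head? = some c := by
  induction n with
  | zero => rfl
  | succ n ih => simp [word, pattern, ih]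

theorem word_injective (n : ℕ) : Function.Injective (word n) := fun c d h => by
  simpa [head?_word] using congrArg List.head? h

theorem getElem_word_add_one_ne {n j : ℕ} (c : Fin 2) (hj : j < K n) :
    (word n (c + 1))[j]'(by rwa [word_length]) ≠ (word n c)[j]'(by rwa [word_length]) := by
  simp only [word_add_one, List.getElem_map]
  exact fin_two_add_one_ne _

theorem occursAt_word_succ {n m : ℕ} (c : Fin 2) (hm : m < n + 3) :
    occursAt (word n ((pattern n c)[m]'(by rwa [pattern_length]))) (word (n + 1) c) (m * K n) :=
  occursAt_flatten_map (word_length n) _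

theorem pattern_readable {n q : ℕ} {a b c : Fin 2}
    (h : occursAt (pattern n c) (pattern n a ++ pattern n b) q) : q = 0 ∨ q = n + 3 := by
  obtain ⟨-, hpre⟩ := occursAt_iff_prefix_drop.1 h
  have hq := hpre.length_le
  simp only [pattern_length, List.length_drop, List.length_append] at hq
  have hlen : (pattern n a ++ pattern n b).length = 2 * (n + 3) := by
    simp only [List.length_append, pattern_length]; omega
  have hletter (i : ℕ) (hi : i < 3) : (pattern n c)[i]'(by rw [pattern_length]; omega) =
      (pattern n a ++ pattern n b)[q + i]'(by omega) := by
    rw [hpre.getElem, List.getElem_drop]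
  have hleft (i : ℕ) (hi : 0 < i) (hin : i < n + 3) :
      (pattern n a ++ pattern n b)[i]'(by omega) = a + 1 := by
    rw [List.getElem_append_left (by rwa [pattern_length]), pattern_getElem_of_pos _ hi hin]
  have hright (i : ℕ) (hin : i < n + 3) :
      (pattern n a ++ pattern n b)[n + 3 + i]'(by omega) = (pattern n b)[i]'(by
        rwa [pattern_length]) := by
    rw [List.getElem_append_right (by simp [pattern_length])]
    simp only [pattern_length, Nat.add_sub_cancel_left]
  have h0 := hletter 0 (by omega)
  have h1 := hletter 1 (by omega)
  have h2 := hletter 2 (by omega)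
  rw [pattern_getElem_zero] at h0
  rw [pattern_getElem_of_pos _ (by omega) (by omega)] at h1 h2
  by_contra hne
  rcases Nat.lt_or_ge (q + 1) (n + 3) with hq1 | hq1
  · rw [hleft _ (by omega) (by omega)] at h0 h1
    exact fin_two_add_one_ne c (h1.trans h0.symm)
  · -- `q = n + 2`: the letters at `q + 1` and `q + 2` are `b` and `b + 1`, not `c + 1` twice
    simp only [show q + 1 = n + 3 + 0 by omega, hright 0 (by omega), pattern_getElem_zero] at h1
    simp only [show q + 2 = n + 3 + 1 by omega, hright 1 (by omega)] at h2
    exact fin_two_add_one_ne b (h2.symm.trans h1)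

theorem word_readable (n : ℕ) {a b c : Fin 2} {q : ℕ}
    (h : occursAt (word n c) (word n a ++ word n b) q) : q = 0 ∨ q = K n := by
  induction n generalizing a b c q with
  | zero =>
    have := h.1
    simp only [word, List.length_cons, List.length_nil, List.length_append] at this
    simp only [Kseq]
    omega
  | succ n ih =>
    simp only [word, ← List.flatten_append, ← List.map_append] at h
    obtain ⟨q', rfl, hq'⟩ := exists_eq_mul_of_occursAt_flatten_map (word_length n)
      (Kseq_add_three_pos n) (word_injective n) (fun _ _ _ _ => ih)
      (by simp [pattern]) h
    rcases pattern_readable hq' with rfl | rfl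
    · simp
    · right; rw [Kseq, mul_comm]

theorem odometerBasedCS_words : OdometerBasedCS (Fin 2) (· + 3) words where
  two_le n := by omega
  w_zero := Set.ext fun l => by simp [words, word, eq_comm]
  nonempty n := Set.range_nonempty _
  finite n := Set.finite_range _
  length_eq := by
    rintro n _ ⟨c, rfl⟩
    exact word_length n c
  concat := by
    rintro n _ ⟨c, rfl⟩
    refine ⟨fun i => word n ((pattern n c)[i.val]'(by simp [pattern_length])),
      fun i => ⟨_, rfl⟩, ?_⟩
    rw [word]
    congr 1
    apply List.ext_getElem (by simp [pattern_length])
    intro i _ _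
    simp only [List.getElem_map, List.getElem_ofFn]
  unique_readable := by
    rintro n _ ⟨a, rfl⟩ _ ⟨b, rfl⟩ _ ⟨c, rfl⟩ q h
    exact word_readable n h
  subword := by
    rintro n _ ⟨c, rfl⟩ _ ⟨d, rfl⟩
    rcases fin_two_eq_or_eq_add_one c d with rfl | rfl
    · exact ⟨_, occursAt_word_succ (m := 0) c (by omega)⟩
    · have := occursAt_word_succ (n := n) (m := 1) d (by omega)
      rw [pattern_getElem_of_pos d one_pos (by omega)] at this
      exact ⟨_, this⟩

theorem exists_word_eq_flatten_map {n N : ℕ} (h : n ≤ N) (c : Fin 2) :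
    ∃ g : List (Fin 2), word N c = (g.map (word n)).flatten := by
  induction N, h using Nat.le_induction generalizing c with
  | base => exact ⟨[c], by simp⟩
  | succ N _ ih =>
    choose G hG using ih
    refine ⟨(pattern N c).flatMap G, ?_⟩
    rw [word, funext hG]
    simp [List.flatMap, List.map_flatten, List.flatten_flatten, Function.comp_def]

theorem exists_subwordAt_eq_word {x : ℤ → Fin 2} (hx : x ∈ CSLimit words)
    (n : ℕ) : ∃ a c, subwordAt x a (K n) = word n c := by
  obtain ⟨N, _, ⟨d, rfl⟩, q, hq⟩ := hx 0 (2 * K n)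
  have hnN : n ≤ N := by
    have := hq.1
    simp only [subwordAt, List.length_ofFn, word_length] at this
    exact strictMono_Kseq_add_three.le_iff_le.1 (by omega)
  obtain ⟨g, hg⟩ := exists_word_eq_flatten_map hnN d
  rw [hg] at hq
  obtain ⟨c, -, r, hr⟩ := exists_occursAt_of_occursAt_flatten_map (word_length n)
    (Kseq_add_three_pos n) hq
    (by simp [subwordAt])
  exact ⟨0 + r, c, by simpa [word_length] using subwordAt_add_eq_of_occursAt hr⟩

theorem exists_ne_add_mul_of_ne {σ : Type*} {x : ℤ → σ} {u v i p : ℤ} (hne : x u ≠ x v)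
    (hu : p ∣ u - i) (hv : p ∣ v - i) : ∃ b : ℤ, x i ≠ x (i + b * p) := by
  by_contra! h
  obtain ⟨s, hs⟩ := hu
  obtain ⟨t, ht⟩ := hv
  refine hne ?_
  rw [show u = i + s * p by linarith, show v = i + t * p by linarith, ← h s, ← h t]

theorem exists_ne_add_mul {x : ℤ → Fin 2} (hx : x ∈ CSLimit words)
    (i : ℤ) {p : ℕ} (hp : 1 ≤ p) : ∃ b : ℤ, x i ≠ x (i + b * p) := by
  obtain ⟨a, c, hac⟩ := exists_subwordAt_eq_word hx (p + 1)
  have hpK : p ≤ K p := strictMono_Kseq_add_three.id_le p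
  obtain ⟨r, hr⟩ := Int.eq_ofNat_of_zero_le (Int.emod_nonneg (i - a) (b := p) (by omega))
  have hrp : r < p := by have := Int.emod_lt_of_pos (i - a) (b := p) (by omega); omega
  have hfirst := occursAt_word_succ (n := p) (m := 0) c (by omega)
  have hlast := occursAt_word_succ (n := p) (m := p) c (by omega)
  rw [pattern_getElem_of_pos _ hp (by omega)] at hlast
  rw [← hac] at hfirst hlast
  replace hfirst := subwordAt_add_eq_of_occursAt hfirst
  replace hlast := subwordAt_add_eq_of_occursAt hlast
  have hdvd : (p : ℤ) ∣ a + r - i := by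
    rw [show a + r - i = -(i - a - (i - a) % p) by rw [hr]; ring]
    exact Int.dvd_self_sub_emod.neg_right
  refine exists_ne_add_mul_of_ne (u := a + r) (v := a + (p * K p : ℕ) + r) ?_ hdvd ?_
  · rw [apply_eq_getElem_of_subwordAt_eq hlast (by rw [word_length]; omega),
      show a + r = a + (0 * K p : ℕ) + r by simp,
      apply_eq_getElem_of_subwordAt_eq hfirst (by rw [word_length]; omega)]
    exact (getElem_word_add_one_ne c (by omega)).symm
  · rw [show a + (p * K p : ℕ) + r - i = a + r - i + p * K p by push_cast; ring]
    exact dvd_add hdvd (dvd_mul_right _ _)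

/-- there is an odometer based construction sequence over the two-letter
alphabet `{0,1}` whose limit `K` contains no sequence with any periodic position: for all
`x ∈ K`, `i ∈ ℤ` and `p ≥ 1` there is `b ∈ ℤ` with `x(i) ≠ x(i + bp)`. In particular no
`x ∈ K` has a periodic position, and no `x ∈ K` is a Toeplitz sequence. -/
theorem exists_odometer_based_system_without_periodic_positions :
    ∃ (k : ℕ → ℕ) (W : ℕ → Set (List (Fin 2))),
      OdometerBasedCS (Fin 2) k W ∧
      (∀ x ∈ CSLimit W, ∀ (i : ℤ) (p : ℕ), 1 ≤ p →
        ∃ b : ℤ, x i ≠ x (i + b * (p : ℤ))) ∧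
      (∀ x ∈ CSLimit W, ∀ (i : ℤ) (p : ℕ), 1 ≤ p →
        ¬ ∀ m : ℤ, x (i + m * (p : ℤ)) = x i) ∧
      (∀ x ∈ CSLimit W,
        ¬ ∀ i : ℤ, ∃ p : ℕ, 1 ≤ p ∧ ∀ m : ℤ, x (i + m * (p : ℤ)) = x i) := by
  refine ⟨(· + 3), words, odometerBasedCS_words,
    fun x hx i p hp => exists_ne_add_mul hx i hp, ?_, ?_⟩
  · intro x hx i p hp hper
    obtain ⟨b, hb⟩ := exists_ne_add_mul hx i hp
    exact hb (hper b).symm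
  · intro x hx hper
    obtain ⟨p, hp, hper⟩ := hper 0
    obtain ⟨b, hb⟩ := exists_ne_add_mul hx 0 hp
    exact hb (hper b).symm

end OdoPaper
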